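/- arXiv:1902.01681 — 7 statements merged into one kernel-verified Lean document; each statement's English description precedes it below -/
import Mathlib

section
/- For all natural numbers n ≥ 1 and integers j ≥ 0, the identity 2·∑_{k≥j} 3^k (k+1) [C(3n−k−1, n−k−2) − 2·C(3n−k−2, n−k−3)] = 3^j (n+j) C(3n−j−1, n−j−2) holds, where C denotes the binomial coefficient and terms with negative lower index are zero. -/
/-! With `A k = C(3n-k-1, n-k-2)` and `B k = C(3n-k-2, n-k-3)`, the absorption identity
`(n-k-2) A k = (3n-k-1) B k` shows that twice the `k`-th summand is `G k - G (k+1)` for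
`G k = 3^k (n+k) A k`. Since `G k = 0` once `k ≥ n-1`, the sum telescopes to `G j`. -/

/-- Binomial coefficient `C(a, b)` for integers, with the convention that it is
zero when `b < 0` or `b > a`. -/
def intChoose (a b : ℤ) : ℤ :=
  if 0 ≤ b then (a.toNat.choose b.toNat : ℤ) else 0

lemma intChoose_of_neg {a b : ℤ} (hb : b < 0) : intChoose a b = 0 := by
  simp [intChoose, not_le.mpr hb]

lemma intChoose_natCast (a b : ℕ) : intChoose a b = a.choose b := by
  simp [intChoose]

lemma succ_mul_intChoose_succ {a b : ℤ} (hba : b ≤ a) :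
    (b + 1) * intChoose (a + 1) (b + 1) = (a + 1) * intChoose a b := by
  rcases lt_or_ge b 0 with hb | hb
  · rw [intChoose_of_neg hb, mul_zero]
    rcases lt_or_ge (b + 1) 0 with hb' | hb'
    · rw [intChoose_of_neg hb', mul_zero]
    · rw [show b + 1 = 0 by omega, zero_mul]
  · lift b to ℕ using hb
    lift a to ℕ using by omega
    simp only [← Nat.cast_add_one, intChoose_natCast]
    exact_mod_cast (mul_comm _ _).trans (Nat.add_one_mul_choose_eq a b).symm

lemma finsum_mem_Ici_eq_sum_Ico {M : Type*} [AddCommMonoid M] {f : ℕ → M} {N : ℕ}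
    (hf : ∀ k ≥ N, f k = 0) (j : ℕ) : ∑ᶠ k ∈ Set.Ici j, f k = ∑ k ∈ Finset.Ico j N, f k := by
  refine finsum_mem_eq_sum_of_subset f (fun k ⟨hjk, hfk⟩ => ?_) fun k hk => ?_
  · simp only [Finset.coe_Ico, Set.mem_Ico]
    exact ⟨hjk, not_le.mp fun hNk => hfk (hf k hNk)⟩
  · simp only [Finset.coe_Ico, Set.mem_Ico] at hk
    exact hk.1

lemma Finset.sum_Ico_sub_succ {M : Type*} [AddCommGroup M] (g : ℕ → M) {m n : ℕ} (hmn : m ≤ n) :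
    ∑ k ∈ Finset.Ico m n, (g k - g (k + 1)) = g m - g n := by
  rw [← neg_sub, ← Finset.sum_Ico_sub g hmn, ← Finset.sum_neg_distrib]
  simp only [neg_sub]

def antidiff (n k : ℕ) : ℤ :=
  3 ^ k * (n + k) * intChoose (3 * n - k - 1) (n - k - 2)

lemma antidiff_of_le {n k : ℕ} (hk : n ≤ k + 1) : antidiff n k = 0 := by
  rw [antidiff, intChoose_of_neg (by omega), mul_zero]

lemma two_mul_summand_eq_antidiff_sub (n k : ℕ) :
    2 * ((3 : ℤ) ^ k * (k + 1) *
        (intChoose (3 * n - k - 1) (n - k - 2) - 2 * intChoose (3 * n - k - 2) (n - k - 3))) =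
      antidiff n k - antidiff n (k + 1) := by
  have absorption := succ_mul_intChoose_succ (a := 3 * n - k - 2) (b := n - k - 3) (by omega)
  simp only [antidiff]
  push_cast
  rw [show (3 * n - k - 2 : ℤ) + 1 = 3 * n - k - 1 by ring,
    show (n - k - 3 : ℤ) + 1 = n - k - 2 by ring] at absorption
  rw [show 3 * (n : ℤ) - (k + 1) - 1 = 3 * n - k - 2 by ring,
    show (n : ℤ) - (k + 1) - 2 = n - k - 3 by ring]
  linear_combination (-(3 : ℤ) ^ k) * absorption

theorem stmt_0_general (n : ℕ) (j : ℕ) :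
    2 * ∑ᶠ k ∈ Set.Ici j, (3 : ℤ) ^ k * (k + 1) *
        (intChoose (3 * n - k - 1) (n - k - 2) -
          2 * intChoose (3 * n - k - 2) (n - k - 3)) =
      3 ^ j * (n + j) * intChoose (3 * n - j - 1) (n - j - 2) := by
  have summand_eq_zero : ∀ k ≥ n + j, (3 : ℤ) ^ k * (k + 1) *
      (intChoose (3 * n - k - 1) (n - k - 2) - 2 * intChoose (3 * n - k - 2) (n - k - 3)) = 0 := by
    intro k hk
    have := two_mul_summand_eq_antidiff_sub n k
    rw [antidiff_of_le (by omega), antidiff_of_le (by omega), sub_zero] at this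
    omega
  rw [finsum_mem_Ici_eq_sum_Ico summand_eq_zero, Finset.mul_sum,
    Finset.sum_congr rfl fun k _ => two_mul_summand_eq_antidiff_sub n k,
    Finset.sum_Ico_sub_succ _ (by omega), antidiff_of_le (k := n + j) (by omega), sub_zero, antidiff]

theorem stmt_0 (n : ℕ) (hn : 1 ≤ n) (j : ℕ) :
    2 * ∑ᶠ k ∈ Set.Ici j, (3 : ℤ) ^ k * (k + 1) *
        (intChoose (3 * n - k - 1) (n - k - 2) -
          2 * intChoose (3 * n - k - 2) (n - k - 3)) =
      3 ^ j * (n + j) * intChoose (3 * n - j - 1) (n - j - 2) :=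
  stmt_0_general n j
end

section
/- For all natural numbers n and i with n ≥ i, the identity 2·∑_{k≥0} 3^k (k+2i+1) C(3n−k+i−2, n−k−i−1) = (n−i)·C(3n+i−1, n−i) holds. -/
lemma absorb (a b : ℕ) : (b + 1) * (a + 1).choose (b + 1) = (a + 1) * a.choose b := by
  rw [Nat.mul_comm]; exact (Nat.add_one_mul_choose_eq a b).symm

theorem stmt_2 (n i : ℕ) (hni : i ≤ n) :
    2 * ∑ᶠ k : ℕ, (3 : ℤ) ^ k * (k + 2 * i + 1) *
        intChoose (3 * n - k + i - 2) (n - k - i - 1) =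
      (n - i) * intChoose (3 * n + i - 1) (n - i) := by
  set m := n - i with hm
  set N := 3 * m + 4 * i with hN
  -- rewrite the finsum as a finite sum over range m
  have hsum : ∑ᶠ k : ℕ, (3 : ℤ) ^ k * (k + 2 * i + 1) *
      intChoose (3 * n - k + i - 2) (n - k - i - 1)
      = ∑ k ∈ Finset.range m, (3 : ℤ) ^ k * (k + 2 * i + 1) *
        ((N - 2 - k).choose (m - 1 - k) : ℤ) := by
    rw [finsum_eq_sum_of_support_subset _ (s := Finset.range m) (by
      intro k hk
      simp only [Function.mem_support, Finset.coe_range, Set.mem_Iio] at hk ⊢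
      by_contra h
      push_neg at h
      apply hk
      have hneg : ¬ (0 ≤ (n : ℤ) - k - i - 1) := by push_cast; omega
      rw [intChoose, if_neg hneg, mul_zero])]
    refine Finset.sum_congr rfl fun k hk => ?_
    simp only [Finset.mem_range] at hk
    have hb : ((n : ℤ) - k - i - 1) = ((m - 1 - k : ℕ) : ℤ) := by push_cast; omega
    have ha : ((3 * n : ℤ) - k + i - 2) = ((N - 2 - k : ℕ) : ℤ) := by push_cast; omega
    rw [ha, hb, intChoose, if_pos (by positivity)]
    simp
  rw [hsum]
  -- telescoping function
  set F : ℕ → ℤ := fun k => 3 ^ k * ((m - k : ℕ) : ℤ) * ((N - 1 - k).choose (m - k) : ℤ)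
    with hF
  have key : ∀ k ∈ Finset.range m,
      2 * ((3 : ℤ) ^ k * (k + 2 * i + 1) * ((N - 2 - k).choose (m - 1 - k) : ℤ))
        = F k - F (k + 1) := by
    intro k hk
    simp only [Finset.mem_range] at hk
    set a := N - 2 - k with hak
    set b := m - 1 - k with hbk
    have h1 : m - k = b + 1 := by omega
    have h2 : N - 1 - k = a + 1 := by omega
    have h3 : m - (k + 1) = b := by omega
    have h4 : N - 1 - (k + 1) = a := by omega
    have habs' : ((b : ℤ) + 1) * ((a + 1).choose (b + 1) : ℤ)
        = ((a : ℤ) + 1) * (a.choose b : ℤ) := by exact_mod_cast absorb a b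
    have hlin : (a : ℤ) + 1 - 3 * b = 2 * ((k : ℤ) + 2 * i + 1) := by
      have ha' : (a : ℤ) = N - 2 - k := by omega
      have hb' : (b : ℤ) = m - 1 - k := by omega
      rw [ha', hb']; push_cast [hN]; ring
    simp only [hF, h1, h2, h3, h4]
    push_cast
    linear_combination (-(3 : ℤ) ^ k) * habs' - (3 : ℤ) ^ k * (a.choose b : ℤ) * hlin
  rw [Finset.mul_sum, Finset.sum_congr rfl key, Finset.sum_range_sub' F]
  have hFm : F m = 0 := by simp [hF]
  have hF0 : F 0 = (m : ℤ) * ((N - 1).choose m : ℤ) := by simp [hF]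
  rw [hFm, hF0, sub_zero]
  -- right-hand side
  have hmn : ((n : ℤ) - i) = (m : ℤ) := by push_cast; omega
  rw [hmn]
  rcases Nat.eq_zero_or_pos m with h0 | hpos
  · simp [h0]
  · have ha : ((3 * n : ℤ) + i - 1) = ((N - 1 : ℕ) : ℤ) := by push_cast; omega
    rw [ha, intChoose, if_pos (by positivity)]
    simp
end

section
/- If S(x) = ∑_{n≥1} (1/(2n+1)) C(3n, n) x^n and T(x) = ∑_{n≥0} (1/(n+1)) C(3n+1, n) x^n as formal power series over ℚ, then (1 + S(x))^2 = T(x). -/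
/-!
`B = ∑ C(3n,n)/(2n+1) xⁿ = 1 + S` is the generating function of ternary trees, so `B = 1 + x B³`.
We obtain this without combinatorics: the hypergeometric recurrence of the coefficients of `B`
is a second-order linear differential equation for `B`, and it makes `E = B - 1 - x B³` satisfy
an equation `G · x E'' = a E + b E'` whose indicial polynomial `4n + 6` has no root in `ℕ`; as
`E(0) = 0`, this forces `E = 0`. Differentiating `B = 1 + x B³` gives `(1 - 3x B²) B' = B³`, and
from the two relations `(x B²)' = B + 3x B'`. Comparing coefficients, `(n + 1) [xⁿ] B²` is
`(3n + 1) C(3n,n)/(2n+1) = C(3n+1,n)`.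
-/

open PowerSeries

/-- Generating function of S-Motzkin paths: `S(x) = ∑_{n ≥ 1} C(3n,n)/(2n+1) xⁿ`. -/
noncomputable def S : PowerSeries ℚ :=
  PowerSeries.mk fun n => if n = 0 then 0 else (Nat.choose (3 * n) n : ℚ) / (2 * n + 1)

/-- Generating function of T-Motzkin paths: `T(x) = ∑_{n ≥ 0} C(3n+1,n)/(n+1) xⁿ`. -/
noncomputable def T : PowerSeries ℚ :=
  PowerSeries.mk fun n => (Nat.choose (3 * n + 1) n : ℚ) / (n + 1)

open scoped Nat

namespace PowerSeries

section CommSemiring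

variable {R : Type*} [CommSemiring R]

theorem coeff_X_mul_derivative (f : R⟦X⟧) (n : ℕ) :
    coeff n (X * d⁄dX R f) = n * coeff n f := by
  cases n with
  | zero => simp
  | succ n => rw [coeff_succ_X_mul, coeff_derivative, mul_comm, Nat.cast_succ]

theorem coeff_mul_eq_constantCoeff_mul {f g : R⟦X⟧} {n : ℕ} (hg : ∀ m < n, coeff m g = 0) :
    coeff n (f * g) = constantCoeff f * coeff n g := by
  obtain ⟨h, rfl⟩ := X_pow_dvd_iff.mpr hg
  rw [mul_left_comm, coeff_X_pow_mul', coeff_X_pow_mul']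
  simp

end CommSemiring

theorem eq_zero_of_derivative_ode {K : Type*} [Field K] [CharZero K] {E G a b : K⟦X⟧}
    (hE : constantCoeff E = 0)
    (hode : G * (X * d⁄dX K (d⁄dX K E)) = a * E + b * d⁄dX K E)
    (hGb : ∀ n : ℕ, n * constantCoeff G ≠ constantCoeff b) : E = 0 := by
  suffices h : ∀ n, ∀ m ≤ n, coeff m E = 0 from ext fun n => h n n le_rfl
  intro n
  induction n with
  | zero => simpa using hE
  | succ n ih =>
    have hW : ∀ m < n, coeff m (d⁄dX K E) = 0 := fun m hm => by
      rw [coeff_derivative, ih (m + 1) hm, zero_mul]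
    have hXW : ∀ m < n, coeff m (X * d⁄dX K (d⁄dX K E)) = 0 := fun m hm => by
      rw [coeff_X_mul_derivative, hW m hm, mul_zero]
    have hcoeff := congrArg (coeff n) hode
    rw [map_add, coeff_mul_eq_constantCoeff_mul hXW, coeff_mul_eq_constantCoeff_mul hW,
      coeff_mul_eq_constantCoeff_mul fun m hm => ih m hm.le, ih n le_rfl,
      coeff_X_mul_derivative, coeff_derivative] at hcoeff
    have hnext : coeff (n + 1) E = 0 := by
      have : (n * constantCoeff G - constantCoeff b) * (n + 1) * coeff (n + 1) E = 0 := by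
        linear_combination hcoeff
      simpa [sub_ne_zero.mpr (hGb n), Nat.cast_add_one_ne_zero] using this
    intro m hm
    rcases Nat.le_succ_iff.mp hm with hm | rfl
    exacts [ih m hm, hnext]

end PowerSeries

def ternaryCatalan (n : ℕ) : ℚ := ((3 * n).choose n : ℚ) / (2 * n + 1)

theorem ternaryCatalan_eq_factorial (n : ℕ) :
    ternaryCatalan n = (3 * n)! / (n ! * (2 * n + 1)!) := by
  rw [ternaryCatalan, Nat.cast_choose ℚ (by omega : n ≤ 3 * n), show 3 * n - n = 2 * n by omega,
    Nat.factorial_succ]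
  push_cast
  field_simp

theorem ternaryCatalan_succ (n : ℕ) :
    2 * (n + 1) * (2 * n + 3) * ternaryCatalan (n + 1)
      = 3 * (3 * n + 1) * (3 * n + 2) * ternaryCatalan n := by
  rw [ternaryCatalan_eq_factorial, ternaryCatalan_eq_factorial,
    show 3 * (n + 1) = 3 * n + 2 + 1 by ring, show 2 * (n + 1) + 1 = 2 * n + 1 + 1 + 1 by ring]
  simp only [Nat.factorial_succ]
  push_cast
  field_simp
  ring

theorem choose_three_mul_add_one (n : ℕ) :
    ((3 * n + 1).choose n : ℚ) = (3 * n + 1) * ternaryCatalan n := by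
  rw [ternaryCatalan_eq_factorial, Nat.cast_choose ℚ (by omega : n ≤ 3 * n + 1),
    show 3 * n + 1 - n = 2 * n + 1 by omega, Nat.factorial_succ]
  push_cast
  field_simp

noncomputable def ternarySeries : ℚ⟦X⟧ := mk ternaryCatalan

local notation "B" => ternarySeries
local notation "D" => d⁄dX ℚ

theorem coeff_ternarySeries (n : ℕ) : coeff n B = ternaryCatalan n := coeff_mk n _

theorem one_add_S_eq_ternarySeries : 1 + S = B := by
  ext (_ | n) <;> simp [S, ternarySeries, ternaryCatalan, coeff_one]

-- `ternaryCatalan_succ`, written with the Euler operator `f ↦ X * D f`.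
theorem ternarySeries_ode :
    4 * (X * D (D B)) + 6 * D B = 27 * (X * D (X * D B)) + 27 * (X * D B) + 6 * B := by
  ext n
  rw [← map_ofNat C 4, ← map_ofNat C 6, ← map_ofNat C 27]
  simp only [map_add, coeff_C_mul, coeff_X_mul_derivative, coeff_derivative, coeff_ternarySeries]
  linear_combination ternaryCatalan_succ n

theorem ternarySeries_eq_one_add_X_mul_pow_three : B = 1 + X * B ^ 3 := by
  have hL : (4 * X - 27 * X ^ 2) * D (D B) = (54 * X - 6) * D B + 6 * B := by
    have h := ternarySeries_ode
    simp only [Derivation.leibniz, derivative_X, smul_eq_mul] at h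
    linear_combination h
  have hD : D (B - 1 - X * B ^ 3) = (1 - 3 * X * B ^ 2) * D B - B ^ 3 := by
    simp only [map_sub, Derivation.leibniz, Derivation.leibniz_pow, Derivation.map_one_eq_zero,
      derivative_X, smul_eq_mul, nsmul_eq_mul]
    ring
  have hDD : D (D (B - 1 - X * B ^ 3)) =
      (1 - 3 * X * B ^ 2) * D (D B) - 6 * B ^ 2 * D B - 6 * X * B * D B ^ 2 := by
    simp only [map_sub, map_add, map_zero, map_nsmul, Derivation.leibniz, Derivation.leibniz_pow,
      Derivation.map_one_eq_zero, derivative_X, smul_eq_mul]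
    ring
  suffices B - 1 - X * B ^ 3 = 0 by linear_combination this
  -- `a` and `b` come from reducing `(1 - 3X B²)² (4 - 27X) · X E''` modulo `E` and `E'`, using `hL`.
  refine eq_zero_of_derivative_ode (G := (1 - 3 * X * B ^ 2) ^ 2 * (4 - 27 * X))
    (a := -6 * B - 6 * B ^ 2 + 6 * X * B * D B - 72 * X ^ 2 * D B ^ 2 - 162 * X ^ 2 * B * D B
      + 54 * X ^ 2 * B ^ 3 * D B + 162 * X ^ 2 * B ^ 4 + 486 * X ^ 3 * D B ^ 2
      + 216 * X ^ 3 * B ^ 2 * D B ^ 2 - 1458 * X ^ 4 * B ^ 2 * D B ^ 2)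
    (b := -6 + 54 * X + 6 * X * B + 6 * X * B ^ 2 - 72 * X ^ 2 * D B - 162 * X ^ 2 * B
      + 48 * X ^ 2 * B * D B + 486 * X ^ 3 * D B - 324 * X ^ 3 * B * D B) ?_ ?_ ?_
  · simp [ternarySeries, ternaryCatalan]
  · rw [hDD, hD]
    linear_combination (1 - 3 * X * B ^ 2) ^ 3 * hL
  · intro n
    simp only [map_mul, map_sub, map_add, map_neg, map_pow, map_one, map_ofNat, constantCoeff_X]
    norm_num
    linarith [n.cast_nonneg (α := ℚ)]

theorem ternarySeries_derivative : (1 - 3 * X * B ^ 2) * D B = B ^ 3 := by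
  have h := congrArg D ternarySeries_eq_one_add_X_mul_pow_three
  simp only [map_add, Derivation.map_one_eq_zero, Derivation.leibniz, Derivation.leibniz_pow,
    derivative_X, smul_eq_mul, nsmul_eq_mul] at h
  linear_combination h

theorem ternarySeries_sq_ode : B ^ 2 + X * D (B ^ 2) = B + 3 * (X * D B) := by
  have hunit : (1 - 3 * X * B ^ 2 : ℚ⟦X⟧) ≠ 0 := fun h => by
    simpa using congrArg constantCoeff h
  refine mul_left_cancel₀ hunit ?_
  simp only [Derivation.leibniz_pow, smul_eq_mul, nsmul_eq_mul]
  linear_combination B * ternarySeries_eq_one_add_X_mul_pow_three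
    + X * (2 * B - 3) * ternarySeries_derivative

theorem coeff_ternarySeries_sq (n : ℕ) :
    coeff n (B ^ 2) = ((3 * n + 1).choose n : ℚ) / (n + 1) := by
  have h := congrArg (coeff n) ternarySeries_sq_ode
  rw [map_add, map_add, ← map_ofNat C 3, coeff_C_mul, coeff_X_mul_derivative,
    coeff_X_mul_derivative, coeff_ternarySeries] at h
  rw [choose_three_mul_add_one, eq_div_iff n.cast_add_one_ne_zero]
  linear_combination h

theorem stmt_3 : (1 + S) ^ 2 = T := by
  ext n
  rw [one_add_S_eq_ternarySeries, coeff_ternarySeries_sq, T, coeff_mk]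
end

section
/- The formal power series T(x) = ∑_{n≥0} (1/(n+1)) C(3n+1, n) x^n over ℚ satisfies the functional equation T = 1 + 2x·T^2 − x^2·T^3. -/
/-
Writing `θ = x d/dx`, the coefficient recurrence `2(n+2)(2n+3) tₙ₊₁ = 3(3n+2)(3n+4) tₙ` of
`tₙ = C(3n+1,n)/(n+1)` says that `T` solves the linear ODE
`(2(2θ+1)(θ+1) - 3x(3θ+2)(3θ+4)) y = 2`, whose solutions are determined by their constant term.
Hensel's lemma in `ℚ⟦x⟧`, applied to the monic reversed cubic `w³ - w² + 2xw - x²` at `w = 1`,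
gives a solution `y = 1/w` of `y = 1 + 2xy² - x²y³` with `y(0) = 1`; differentiating the cubic
twice and eliminating `y'`, `y''` shows that `y` solves the same ODE, so `y = T`.
-/

open PowerSeries

namespace PowerSeries

variable {R : Type*} [CommRing R]

@[simp]
theorem derivative_ofNat (k : ℕ) [k.AtLeastTwo] : d⁄dX R ofNat(k) = 0 :=
  (d⁄dX R).map_natCast k

@[simp]
theorem coeff_ofNat_mul (n k : ℕ) [k.AtLeastTwo] (f : R⟦X⟧) :
    coeff n (ofNat(k) * f) = ofNat(k) * coeff n f := by
  rw [← map_ofNat C k, coeff_C_mul]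

noncomputable def euler (f : R⟦X⟧) : R⟦X⟧ := X * d⁄dX R f

@[simp]
theorem coeff_euler (f : R⟦X⟧) (n : ℕ) : coeff n (euler f) = n * coeff n f := by
  cases n with
  | zero => simp [euler]
  | succ n => rw [euler, coeff_succ_X_mul, coeff_derivative, mul_comm]; push_cast; rfl

end PowerSeries

theorem exists_cubic_solution (R : Type*) [CommRing R] :
    ∃ y : R⟦X⟧, constantCoeff y = 1 ∧ y = 1 + 2 * X * y ^ 2 - X ^ 2 * y ^ 3 := by
  let p : Polynomial R⟦X⟧ :=
    Polynomial.X ^ 3 - Polynomial.X ^ 2 + Polynomial.C (2 * X) * Polynomial.X - Polynomial.C (X ^ 2)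
  have hp : p.Monic := by unfold p; monicity!
  have heval : p.eval 1 = X * (2 - X) := by
    simp only [p, Polynomial.eval_sub, Polynomial.eval_add, Polynomial.eval_pow,
      Polynomial.eval_mul, Polynomial.eval_X, Polynomial.eval_C]
    ring
  have hderiv : p.derivative.eval 1 = 1 + 2 * X := by norm_num [p, Polynomial.derivative_pow]
  obtain ⟨w, hw, hw1⟩ := HenselianRing.is_henselian (I := Ideal.span {X}) p hp 1
    (heval ▸ Ideal.mul_mem_right _ _ (Ideal.mem_span_singleton_self X))
    (hderiv ▸ (isUnit_iff_constantCoeff.2 (by simp)).map (Ideal.Quotient.mk _))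
  have hw0 : constantCoeff w = 1 := by
    rwa [Ideal.mem_span_singleton, X_dvd_iff, map_sub, map_one, sub_eq_zero] at hw1
  obtain ⟨y, hy⟩ := (isUnit_iff_constantCoeff.2 (hw0 ▸ isUnit_one)).exists_left_inv
  refine ⟨y, ?_, ?_⟩
  · simpa [hw0] using congrArg constantCoeff hy
  · have hroot : w ^ 3 - w ^ 2 + 2 * X * w - X ^ 2 = 0 := by simpa [p] using hw
    linear_combination
      (-y ^ 3) * hroot + ((y * w) ^ 2 + y * w + 1 - y * (y * w + 1) + 2 * X * y ^ 2) * hy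

section

variable {R : Type*} [CommRing R]

/-- The operator `2(2θ+1)(θ+1) - 3X(3θ+2)(3θ+4)` with `θ = euler`, i.e.
`(4X² - 27X³) f'' + (10X - 81X²) f' + (2 - 24X) f`. -/
noncomputable def odeOp (f : R⟦X⟧) : R⟦X⟧ :=
  4 * euler (euler f) + 6 * euler f + 2 * f - X * (27 * euler (euler f) + 54 * euler f + 24 * f)

theorem coeff_zero_odeOp (f : R⟦X⟧) : coeff 0 (odeOp f) = 2 * coeff 0 f := by
  simp only [odeOp, map_sub, map_add, coeff_ofNat_mul, coeff_euler, coeff_zero_X_mul]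
  simp

theorem coeff_succ_odeOp (f : R⟦X⟧) (n : ℕ) :
    coeff (n + 1) (odeOp f) =
      2 * (n + 2) * (2 * n + 3) * coeff (n + 1) f - 3 * (3 * n + 2) * (3 * n + 4) * coeff n f := by
  simp only [odeOp, map_sub, map_add, coeff_succ_X_mul, coeff_ofNat_mul, coeff_euler]
  push_cast
  ring

theorem odeOp_eq_two_of_cubic {y : R⟦X⟧} (hy : y = 1 + 2 * X * y ^ 2 - X ^ 2 * y ^ 3) :
    odeOp y = 2 := by
  set y₁ := d⁄dX R y
  set y₂ := d⁄dX R y₁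
  set u := 3 * X ^ 2 * y ^ 2 - 4 * X * y + 1
  have h₁ : u * y₁ = 2 * y ^ 2 - 2 * X * y ^ 3 := by
    have h := congrArg (d⁄dX R) hy
    simp only [map_sub, map_add, Derivation.leibniz, Derivation.leibniz_pow, derivative_X,
      derivative_one, derivative_ofNat, smul_eq_mul, nsmul_eq_mul] at h
    linear_combination h
  have h₂ : (6 * X * y ^ 2 + 6 * X ^ 2 * y * y₁ - 4 * y - 4 * X * y₁) * y₁ + u * y₂ =
      4 * y * y₁ - 2 * y ^ 3 - 6 * X * y ^ 2 * y₁ := by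
    have h := congrArg (d⁄dX R) h₁
    simp only [u, map_sub, map_add, Derivation.leibniz, Derivation.leibniz_pow, derivative_X,
      derivative_one, derivative_ofNat, smul_eq_mul, nsmul_eq_mul] at h
    linear_combination h
  have hu : IsUnit u := isUnit_iff_constantCoeff.2 (by simp [u, map_ofNat])
  have hode :
      (4 * X ^ 2 - 27 * X ^ 3) * y₂ + (10 * X - 81 * X ^ 2) * y₁ + (2 - 24 * X) * y = 2 := by
    -- by `h₁` and `h₂`, `y₁` and `y₂` are polynomials in `X, y` divided by `u` and `u³`
    refine (hu.pow 3).mul_left_cancel ?_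
    linear_combination
      (-243 * X ^ 7 * y ^ 4 + 36 * X ^ 6 * y ^ 4 + 648 * X ^ 6 * y ^ 3 - 96 * X ^ 5 * y ^ 3
        - 594 * X ^ 5 * y ^ 2 + 88 * X ^ 4 * y ^ 2 + 216 * X ^ 4 * y - 32 * X ^ 3 * y
        - 27 * X ^ 3 + 4 * X ^ 2) * h₂
      + (486 * X ^ 7 * y ^ 3 * y₁ - 72 * X ^ 6 * y ^ 3 * y₁ - 972 * X ^ 6 * y ^ 2 * y₁
        + 144 * X ^ 5 * y ^ 2 * y₁ + 594 * X ^ 5 * y * y₁ - 88 * X ^ 4 * y * y₁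
        - 108 * X ^ 4 * y₁ + 16 * X ^ 3 * y₁ - 81 * X ^ 6 * y ^ 4 - 6 * X ^ 5 * y ^ 4
        + 540 * X ^ 5 * y ^ 3 - 32 * X ^ 4 * y ^ 3 - 810 * X ^ 4 * y ^ 2 + 76 * X ^ 3 * y ^ 2
        + 432 * X ^ 3 * y - 48 * X ^ 2 * y - 81 * X ^ 2 + 10 * X) * h₁
      + (-6 * X ^ 4 * y ^ 4 + 16 * X ^ 3 * y ^ 3 - 12 * X ^ 2 * y ^ 2 + 2) * hy
  have hθθ : euler (euler y) = X * y₁ + X ^ 2 * y₂ := by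
    simp only [euler, Derivation.leibniz, derivative_X, smul_eq_mul]
    ring
  rw [odeOp, hθθ, euler]
  linear_combination hode

end

theorem eq_of_odeOp_eq {K : Type*} [Field K] [CharZero K] {f g : K⟦X⟧} (h : odeOp f = odeOp g)
    (h0 : coeff 0 f = coeff 0 g) : f = g := by
  ext n
  induction n with
  | zero => exact h0
  | succ n ih =>
    have hn := congrArg (coeff (n + 1)) h
    rw [coeff_succ_odeOp, coeff_succ_odeOp, ih, sub_left_inj] at hn
    refine mul_left_cancel₀ ?_ hn
    norm_cast

theorem choose_three_mul_add_four (n : ℕ) :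
    2 * (n + 1) * (2 * n + 3) * (3 * n + 4).choose (n + 1) =
      3 * (3 * n + 2) * (3 * n + 4) * (3 * n + 1).choose n := by
  have h1 := Nat.choose_mul_succ_eq (3 * n + 1) n
  have h2 := Nat.choose_mul_succ_eq (3 * n + 2) n
  have h3 := Nat.add_one_mul_choose_eq (3 * n + 3) n
  rw [show 3 * n + 1 + 1 - n = 2 * n + 2 by omega] at h1
  rw [show 3 * n + 2 + 1 - n = 2 * n + 3 by omega] at h2
  apply Nat.eq_of_mul_eq_mul_right n.succ_pos
  zify at h1 h2 h3 ⊢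
  linear_combination (-2 * (n + 1) * (2 * n + 3) : ℤ) * h3 - 2 * (n + 1) * (3 * n + 4) * h2
    - 3 * (n + 1) * (3 * n + 4) * h1

theorem odeOp_T : odeOp T = 2 := by
  ext n
  cases n with
  | zero => simp [coeff_zero_odeOp, T, map_ofNat]
  | succ n =>
    have hrec : (2 * (n + 1) * (2 * n + 3) * (3 * n + 4).choose (n + 1) : ℚ) =
        3 * (3 * n + 2) * (3 * n + 4) * (3 * n + 1).choose n := mod_cast choose_three_mul_add_four n
    rw [coeff_succ_odeOp, ← map_ofNat C, coeff_C, if_neg n.succ_ne_zero, T, coeff_mk, coeff_mk,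
      show 3 * (n + 1) + 1 = 3 * n + 4 by ring]
    push_cast
    field_simp
    linear_combination (n + 2 : ℚ) * hrec

theorem stmt_4 : T = 1 + 2 * X * T ^ 2 - X ^ 2 * T ^ 3 := by
  obtain ⟨y, hy₀, hy⟩ := exists_cubic_solution ℚ
  have hyT : y = T :=
    eq_of_odeOp_eq ((odeOp_eq_two_of_cubic hy).trans odeOp_T.symm) (by simp [hy₀, T])
  exact hyT ▸ hy
end

section
/- The formal power series S(x) = ∑_{n≥1} (1/(2n+1)) C(3n, n) x^n over ℚ satisfies the functional equation S = x + 3x·S + 3x·S^2 + x·S^3, equivalently S = x·(1+S)^3. -/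
/-!
The series `T = 1 + S` has coefficients `tₙ = C(3n,n)/(2n+1)`, whose ratio
`tₙ₊₁/tₙ = 3(3n+1)(3n+2) / (2(n+1)(2n+3))` says that `T` is annihilated by the hypergeometric
operator `L = 2θ(2θ+1) - 3X(3θ+1)(3θ+2)`, `θ = X d/dX`; moreover `L f = 0` determines `f` from its
constant coefficient. On the other hand Hensel's lemma gives a power series `A = 1 + X A³`, and
implicit differentiation of the cubic (`θA (3 - 2A) = A (A - 1)`, with `3 - 2A` a unit) shows
`L A = 0`. Hence `A = T`.
-/

open PowerSeries

theorem Derivation.map_ofNat {R A M : Type*} [CommSemiring R] [CommSemiring A] [Algebra R A]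
    [AddCommMonoid M] [Module A M] [Module R M] (D : Derivation R A M) (n : ℕ) [n.AtLeastTwo] :
    D (no_index (OfNat.ofNat n : A)) = 0 := by
  rw [← Nat.cast_ofNat]
  exact D.map_natCast n

section

variable {R : Type*} [CommRing R]

noncomputable def eulerOp : Derivation R R⟦X⟧ R⟦X⟧ := (X : R⟦X⟧) • d⁄dX R

theorem eulerOp_apply (f : R⟦X⟧) : eulerOp f = X * d⁄dX R f := rfl

@[simp] theorem eulerOp_X : eulerOp (X : R⟦X⟧) = X := by simp [eulerOp_apply]

theorem coeff_eulerOp (f : R⟦X⟧) (n : ℕ) : coeff n (eulerOp f) = n * coeff n f := by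
  cases n with
  | zero => simp [eulerOp_apply]
  | succ n => rw [eulerOp_apply, coeff_succ_X_mul, coeff_derivative]; push_cast; ring

/-- `2θ(2θ+1) - 3X(3θ+1)(3θ+2)` with `θ = eulerOp`: the operator of the hypergeometric equation
of `₂F₁(1/3, 2/3; 3/2; 27X/4)`. -/
noncomputable def fussCatalanOp (f : R⟦X⟧) : R⟦X⟧ :=
  4 * eulerOp (eulerOp f) + 2 * eulerOp f
    - 3 * X * (9 * eulerOp (eulerOp f) + 9 * eulerOp f + 2 * f)

theorem coeff_zero_fussCatalanOp (f : R⟦X⟧) : coeff 0 (fussCatalanOp f) = 0 := by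
  simp only [fussCatalanOp, mul_assoc, map_sub, map_add, coeff_zero_X_mul, coeff_eulerOp,
    ← map_ofNat C, coeff_C_mul]
  simp

theorem coeff_succ_fussCatalanOp (f : R⟦X⟧) (n : ℕ) :
    coeff (n + 1) (fussCatalanOp f) =
      2 * (n + 1) * (2 * n + 3) * coeff (n + 1) f - 3 * (3 * n + 1) * (3 * n + 2) * coeff n f := by
  simp only [fussCatalanOp, mul_assoc, map_sub, map_add, coeff_succ_X_mul, coeff_eulerOp,
    ← map_ofNat C, coeff_C_mul]
  push_cast
  ring

theorem eq_of_fussCatalanOp_eq [IsDomain R] [CharZero R] {f g : R⟦X⟧}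
    (h : fussCatalanOp f = fussCatalanOp g) (h₀ : constantCoeff f = constantCoeff g) : f = g := by
  ext n
  induction n with
  | zero => simpa using h₀
  | succ n ih =>
    have hn := congrArg (coeff (n + 1)) h
    rw [coeff_succ_fussCatalanOp, coeff_succ_fussCatalanOp, ih] at hn
    have hne : (2 * (n + 1) * (2 * n + 3) : R) ≠ 0 := by norm_cast
    exact mul_left_cancel₀ hne (by linear_combination hn)

theorem constantCoeff_eq_one_of_eq_one_add_X_mul {A B : R⟦X⟧} (h : A = 1 + X * B) :
    constantCoeff A = 1 := by
  simp [h]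

theorem exists_eq_one_add_X_mul_pow_three : ∃ A : R⟦X⟧, A = 1 + X * A ^ 3 := by
  -- Hensel needs a monic cubic: `V = A⁻¹` is the root of `T³ - T² + X` lifting `1`.
  obtain ⟨V, hroot, hV⟩ := HenselianRing.is_henselian (I := Ideal.span {(X : R⟦X⟧)})
    (Polynomial.X ^ 3 - Polynomial.X ^ 2 + Polynomial.C X) (by monicity!) 1
    (by simp) (by norm_num [map_ofNat])
  have hV₁ : constantCoeff V = 1 := by
    simpa [sub_eq_zero] using X_dvd_iff.mp (Ideal.mem_span_singleton.mp hV)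
  obtain ⟨A, hAV⟩ : ∃ A, A * V = 1 :=
    (isUnit_iff_constantCoeff.mpr (hV₁ ▸ isUnit_one)).exists_left_inv
  have hroot : V ^ 3 - V ^ 2 + X = 0 := by simpa using hroot
  exact ⟨A, by
    linear_combination (-A ^ 3) * hroot + ((A * V) ^ 2 + A * V + 1 - A * (A * V + 1)) * hAV⟩

theorem fussCatalanOp_eq_zero_of_eq_one_add_X_mul_pow_three {A : R⟦X⟧}
    (hA : A = 1 + X * A ^ 3) : fussCatalanOp A = 0 := by
  have hθA := congrArg eulerOp hA
  simp only [map_add, Derivation.leibniz, Derivation.leibniz_pow, eulerOp_X,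
    Derivation.map_one_eq_zero, smul_eq_mul, nsmul_eq_mul] at hθA
  norm_num at hθA
  have h₁ : eulerOp A * (3 - 2 * A) = A * (A - 1) := by
    linear_combination A * hθA - (3 * eulerOp A + A) * hA
  have hθ₁ := congrArg eulerOp h₁
  simp only [map_sub, Derivation.leibniz, Derivation.map_ofNat, Derivation.map_one_eq_zero,
    smul_eq_mul] at hθ₁
  have h₂ : (3 - 2 * A) ^ 3 * eulerOp (eulerOp A) = A * (A - 1) * (-2 * A ^ 2 + 6 * A - 3) := by
    linear_combination (3 - 2 * A) ^ 2 * hθ₁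
      + (2 * (eulerOp A * (3 - 2 * A) + A * (A - 1)) + (2 * A - 1) * (3 - 2 * A)) * h₁
  have hunit : IsUnit (3 - 2 * A) := by
    rw [isUnit_iff_constantCoeff]
    norm_num [constantCoeff_eq_one_of_eq_one_add_X_mul hA, map_ofNat constantCoeff]
  rw [← (hunit.pow 3).mul_right_eq_zero, fussCatalanOp]
  linear_combination (4 - 27 * X) * h₂ + (2 - 27 * X) * (3 - 2 * A) ^ 2 * h₁ + 6 * A * hA

end

theorem cast_choose_three_mul_succ (n : ℕ) :
    ((3 * (n + 1)).choose (n + 1) : ℚ) * (2 * (n + 1) * (2 * n + 1)) =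
      3 * (3 * n + 1) * (3 * n + 2) * (3 * n).choose n := by
  have h₁ : (3 * n + 3 : ℚ) * (3 * n + 2).choose n = (3 * n + 3).choose (n + 1) * (n + 1) := by
    exact_mod_cast Nat.add_one_mul_choose_eq (3 * n + 2) n
  have h₂ : ((3 * n + 1).choose n : ℚ) * (3 * n + 2) = (3 * n + 2).choose n * (2 * n + 2) := by
    have := Nat.choose_mul_succ_eq (3 * n + 1) n
    rw [show 3 * n + 1 + 1 - n = 2 * n + 2 by omega] at this
    exact_mod_cast this
  have h₃ : ((3 * n).choose n : ℚ) * (3 * n + 1) = (3 * n + 1).choose n * (2 * n + 1) := by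
    have := Nat.choose_mul_succ_eq (3 * n) n
    rw [show 3 * n + 1 - n = 2 * n + 1 by omega] at this
    exact_mod_cast this
  rw [show 3 * (n + 1) = 3 * n + 3 by ring]
  linear_combination (-2 * (2 * n + 1) : ℚ) * h₁ - 3 * (2 * n + 1) * h₂ - 3 * (3 * n + 2) * h₃

theorem one_add_S : 1 + S = mk fun n => ((3 * n).choose n : ℚ) / (2 * n + 1) := by
  ext n
  rcases n with _ | n <;> simp [S]

theorem fussCatalanOp_one_add_S : fussCatalanOp (1 + S) = 0 := by
  ext n
  rcases n with _ | n
  · exact coeff_zero_fussCatalanOp _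
  · rw [coeff_succ_fussCatalanOp, one_add_S, coeff_mk, coeff_mk, map_zero]
    have := cast_choose_three_mul_succ n
    push_cast at this ⊢
    field_simp
    linear_combination (2 * n + 3 : ℚ) * this

theorem stmt_5 :
    S = X + 3 * X * S + 3 * X * S ^ 2 + X * S ^ 3 ∧ S = X * (1 + S) ^ 3 := by
  obtain ⟨A, hA⟩ := exists_eq_one_add_X_mul_pow_three (R := ℚ)
  have hA_eq : A = 1 + S := by
    refine eq_of_fussCatalanOp_eq ?_ ?_
    · rw [fussCatalanOp_eq_zero_of_eq_one_add_X_mul_pow_three hA, fussCatalanOp_one_add_S]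
    · simp [constantCoeff_eq_one_of_eq_one_add_X_mul hA, S]
  have key : S = X * (1 + S) ^ 3 := by
    rw [hA_eq] at hA
    linear_combination hA
  exact ⟨by linear_combination key, key⟩
end

section
/- For all n ≥ 1: (3·C(3n+3, n−1) − 11·C(3n+2, n−2) + 6·C(3n+1, n−3)) / ((1/(n+1))·C(3n+1, n)) = n(19n+26) / (2(2n+3)(n+2)). -/
set_option maxHeartbeats 1000000

open Nat in
lemma main_case (k : ℕ) :
    ((3 * ((3*k+12).choose (k+2)) - 11 * ((3*k+11).choose (k+1)) + 6 * ((3*k+10).choose k) : ℚ))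
      / ((1/((k:ℚ)+4)) * ((3*k+10).choose (k+3)))
    = ((k:ℚ)+3)*(19*((k:ℚ)+3)+26)/(2*(2*((k:ℚ)+3)+3)*(((k:ℚ)+3)+2)) := by
  have c1 : (((3*k+12).choose (k+2) : ℚ)) = (3*k+12)! / ((k+2)! * (2*k+10)!) := by
    rw [Nat.cast_choose ℚ (by omega), show 3*k+12 - (k+2) = 2*k+10 from by omega]
  have c2 : (((3*k+11).choose (k+1) : ℚ)) = (3*k+11)! / ((k+1)! * (2*k+10)!) := by
    rw [Nat.cast_choose ℚ (by omega), show 3*k+11 - (k+1) = 2*k+10 from by omega]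
  have c3 : (((3*k+10).choose k : ℚ)) = (3*k+10)! / (k ! * (2*k+10)!) := by
    rw [Nat.cast_choose ℚ (by omega), show 3*k+10 - k = 2*k+10 from by omega]
  have c4 : (((3*k+10).choose (k+3) : ℚ)) = (3*k+10)! / ((k+3)! * (2*k+7)!) := by
    rw [Nat.cast_choose ℚ (by omega), show 3*k+10 - (k+3) = 2*k+7 from by omega]
  have e1 : (((3*k+12)! : ℚ)) = ((3*k+12):ℚ)*((3*k+11):ℚ)*((3*k+10)! : ℚ) := by
    rw [show 3*k+12 = (3*k+10+1)+1 by ring, Nat.factorial_succ, Nat.factorial_succ]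
    push_cast; ring
  have e2 : (((3*k+11)! : ℚ)) = ((3*k+11):ℚ)*((3*k+10)! : ℚ) := by
    rw [show 3*k+11 = (3*k+10)+1 by ring, Nat.factorial_succ]
    push_cast; ring
  have e3 : (((k+2)! : ℚ)) = ((k:ℚ)+2)*((k:ℚ)+1)*(k ! : ℚ) := by
    rw [show k+2 = (k+1)+1 by ring, Nat.factorial_succ, Nat.factorial_succ]
    push_cast; ring
  have e4 : (((k+1)! : ℚ)) = ((k:ℚ)+1)*(k ! : ℚ) := by
    rw [Nat.factorial_succ]; push_cast; ring
  have e5 : (((k+3)! : ℚ)) = ((k:ℚ)+3)*((k:ℚ)+2)*((k:ℚ)+1)*(k ! : ℚ) := by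
    rw [show k+3 = ((k+1)+1)+1 by ring, Nat.factorial_succ, Nat.factorial_succ,
      Nat.factorial_succ]
    push_cast; ring
  have e6 : (((2*k+10)! : ℚ)) = (2*(k:ℚ)+10)*(2*(k:ℚ)+9)*(2*(k:ℚ)+8)*((2*k+7)! : ℚ) := by
    rw [show 2*k+10 = ((2*k+7+1)+1)+1 by ring, Nat.factorial_succ, Nat.factorial_succ,
      Nat.factorial_succ]
    push_cast; ring
  have f1 : ((3*k+10)! : ℚ) ≠ 0 := by positivity
  have f2 : (k ! : ℚ) ≠ 0 := by positivity
  have f3 : ((2*k+7)! : ℚ) ≠ 0 := by positivity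
  rw [c1, c2, c3, c4, e1, e2, e3, e4, e5, e6]
  push_cast
  have h1 : ((k:ℚ)+1) ≠ 0 := by positivity
  have h2 : ((k:ℚ)+2) ≠ 0 := by positivity
  have h3 : ((k:ℚ)+3) ≠ 0 := by positivity
  have h4 : ((k:ℚ)+4) ≠ 0 := by positivity
  field_simp
  ring

theorem stmt_9 (n : ℕ) (hn : 1 ≤ n) :
    ((3 * intChoose (3 * n + 3) (n - 1) - 11 * intChoose (3 * n + 2) (n - 2)
        + 6 * intChoose (3 * n + 1) (n - 3) : ℤ) : ℚ) /
        ((1 / (n + 1)) * Nat.choose (3 * n + 1) n) =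
      n * (19 * n + 26) / (2 * (2 * n + 3) * (n + 2)) := by
  match n, hn with
  | 1, _ => norm_num [intChoose]
  | 2, _ => norm_num [intChoose, Nat.choose]
  | (k+3), _ =>
    have h1 : intChoose (3 * ((k:ℤ)+3) + 3) (((k:ℤ)+3) - 1) = ((3*k+12).choose (k+2) : ℤ) := by
      rw [intChoose, if_pos (by omega),
        show (3 * ((k:ℤ)+3) + 3).toNat = 3*k+12 from by omega,
        show (((k:ℤ)+3) - 1).toNat = k+2 from by omega]
    have h2 : intChoose (3 * ((k:ℤ)+3) + 2) (((k:ℤ)+3) - 2) = ((3*k+11).choose (k+1) : ℤ) := by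
      rw [intChoose, if_pos (by omega),
        show (3 * ((k:ℤ)+3) + 2).toNat = 3*k+11 from by omega,
        show (((k:ℤ)+3) - 2).toNat = k+1 from by omega]
    have h3 : intChoose (3 * ((k:ℤ)+3) + 1) (((k:ℤ)+3) - 3) = ((3*k+10).choose k : ℤ) := by
      rw [intChoose, if_pos (by omega),
        show (3 * ((k:ℤ)+3) + 1).toNat = 3*k+10 from by omega,
        show (((k:ℤ)+3) - 3).toNat = (k:ℕ) from by omega]
    have h4 : (3 * (k+3) + 1) = 3*k+10 := by ring
    push_cast
    rw [h1, h2, h3, h4]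
    have := main_case k
    push_cast at this ⊢
    convert this using 2 <;> ring
end

section
/- For all n ≥ 1: (C(3n, n−1) − 2·C(3n−1, n−2)) / ((1/(2n+1))·C(3n, n)) = n/3 + 2/3. -/
theorem stmt_15 (n : ℕ) (hn : 1 ≤ n) :
    ((intChoose (3 * n) (n - 1) - 2 * intChoose (3 * n - 1) (n - 2) : ℤ) : ℚ) /
        ((1 / (2 * n + 1)) * Nat.choose (3 * n) n) =
      n / 3 + 2 / 3 := by
  obtain rfl | hn2 : n = 1 ∨ 2 ≤ n := by omega
  · norm_num [intChoose]
  · obtain ⟨k, rfl⟩ : ∃ k, n = k + 2 := ⟨n - 2, by omega⟩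
    have e1 : intChoose (3 * ((k : ℤ) + 2)) (((k : ℤ) + 2) - 1)
        = ((3 * k + 6).choose (k + 1) : ℤ) := by
      unfold intChoose
      rw [if_pos (by omega)]
      congr 2 <;> omega
    have e2 : intChoose (3 * ((k : ℤ) + 2) - 1) (((k : ℤ) + 2) - 2)
        = ((3 * k + 5).choose k : ℤ) := by
      unfold intChoose
      rw [if_pos (by omega)]
      congr 2 <;> omega
    have h1 : (3 * k + 6).choose (k + 2) * (k + 2) = (3 * k + 6).choose (k + 1) * (2 * k + 5) := by
      have := Nat.choose_succ_right_eq (3 * k + 6) (k + 1)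
      have h : 3 * k + 6 - (k + 1) = 2 * k + 5 := by omega
      rwa [h] at this
    have h2 : (3 * k + 5).choose (k + 1) * (k + 1) = (3 * k + 5).choose k * (2 * k + 5) := by
      have := Nat.choose_succ_right_eq (3 * k + 5) k
      have h : 3 * k + 5 - k = 2 * k + 5 := by omega
      rwa [h] at this
    have h3 : (3 * k + 6) * (3 * k + 5).choose (k + 1) = (3 * k + 6).choose (k + 2) * (k + 2) := by
      have := Nat.add_one_mul_choose_eq (3 * k + 5) (k + 1)
      simpa using this
    have hapos : 0 < (3 * k + 6).choose (k + 2) := Nat.choose_pos (by omega)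
    have h1q : ((3 * k + 6).choose (k + 2) : ℚ) * (k + 2)
        = ((3 * k + 6).choose (k + 1) : ℚ) * (2 * k + 5) := by exact_mod_cast h1
    have h2q : ((3 * k + 5).choose (k + 1) : ℚ) * (k + 1)
        = ((3 * k + 5).choose k : ℚ) * (2 * k + 5) := by exact_mod_cast h2
    have h3q : (3 * (k : ℚ) + 6) * ((3 * k + 5).choose (k + 1) : ℚ)
        = ((3 * k + 6).choose (k + 2) : ℚ) * (k + 2) := by exact_mod_cast h3
    have haq : ((3 * k + 6).choose (k + 2) : ℚ) ≠ 0 := by positivity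
    push_cast
    rw [e1, e2]
    push_cast
    rw [show 3 * (k + 2) = 3 * k + 6 from by ring]
    rw [div_eq_iff (by positivity)]
    have expand : (((k:ℚ)+2)/3+2/3) * (1/(2*((k:ℚ)+2)+1) * ((3 * k + 6).choose (k + 2) : ℚ))
        = ((k:ℚ)+4) * ((3 * k + 6).choose (k + 2) : ℚ) / (3*(2*(k:ℚ)+5)) := by
      have : (2*((k:ℚ)+2)+1) ≠ 0 := by positivity
      field_simp
      ring
    rw [expand, eq_div_iff (by positivity)]
    apply mul_left_cancel₀ (show ((k:ℚ)+2) ≠ 0 by positivity)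
    linear_combination (-3*((k:ℚ)+2))*h1q + (6*((k:ℚ)+2))*h2q + (-2*((k:ℚ)+1))*h3q
end
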